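/- arXiv:2003.06702 — 2 statements merged into one kernel-verified Lean document; each statement's English description precedes it below -/
import Mathlib

section
/- Let a, b > 0 with a − b > 1, let 0 < ε < min{1, (a−1−b)/(224b)}, let φ(t) = 3π/2 for t ≤ 1 and φ(t) = 3π/2 + ε·ln(ln(e + (t−1)⁴)) for t > 1, and let g(t) = t^(a + b·sin(φ(t))) for t > 0, g(0) = 0. Then for every t > 0: 0 < (a − b − 8bε)·g(t)/t ≤ g'(t) ≤ (a + b + 8bε)·g(t)/t. In particular g'(t) > 0 for every t > 0. -/
open Real Set

/-!
Writing `g t = t ^ E t` with `E = a + b sin φ`, logarithmic differentiation gives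
`g' t = (g t / t) (E t + t log t · E' t)`. The first summand lies in `[a - b, a + b]`. The phase
grows so slowly that `t log t · φ' t ≤ 8 ε`: for `t > 1` one has `log t ≤ log (e + (t - 1) ^ 4)`
and `t (t - 1) ^ 3 ≤ 2 (e + (t - 1) ^ 4)`. Hence the second summand is at most `8 b ε` in
absolute value.
-/

theorem hasDerivAt_ite_le {f₁ f₂ : ℝ → ℝ} {c x d₁ d₂ : ℝ} (h₁ : HasDerivAt f₁ d₁ x)
    (h₂ : HasDerivAt f₂ d₂ x) (hc : f₁ c = f₂ c) (hd : x = c → d₁ = d₂) :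
    HasDerivAt (fun y => if y ≤ c then f₁ y else f₂ y) (if x ≤ c then d₁ else d₂) x := by
  rcases lt_trichotomy x c with hx | rfl | hx
  · rw [if_pos hx.le]
    refine h₁.congr_of_eventuallyEq ?_
    filter_upwards [Iio_mem_nhds hx] with y hy using if_pos hy.le
  · rw [if_pos le_rfl, ← hasDerivWithinAt_univ, ← Iic_union_Ici]
    refine (h₁.hasDerivWithinAt.congr_of_mem (fun y hy => if_pos hy) self_mem_Iic).union ?_
    rw [hd rfl]
    refine h₂.hasDerivWithinAt.congr_of_mem (fun y hy => ?_) self_mem_Ici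
    split_ifs with hyx
    · rw [le_antisymm hyx (mem_Ici.mp hy), hc]
    · rfl
  · rw [if_neg hx.not_ge]
    refine h₂.congr_of_eventuallyEq ?_
    filter_upwards [Ioi_mem_nhds hx] with y hy using if_neg hy.not_ge

theorem HasDerivAt.id_rpow {E : ℝ → ℝ} {E' t : ℝ} (hE : HasDerivAt E E' t) (ht : 0 < t) :
    HasDerivAt (fun x => x ^ E x) (t ^ E t / t * (E t + t * Real.log t * E')) t := by
  have h := (hasDerivAt_id t).rpow hE ht
  simp only [id] at h
  convert h using 1
  rw [rpow_sub ht, rpow_one]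
  field_simp

theorem deriv_id_rpow_mem_Icc {E : ℝ → ℝ} {E' t m M δ : ℝ} (hE : HasDerivAt E E' t)
    (ht : 0 < t) (hm : m ≤ E t) (hM : E t ≤ M) (hδ : |t * Real.log t * E'| ≤ δ) :
    deriv (fun x => x ^ E x) t ∈ Icc ((m - δ) * (t ^ E t / t)) ((M + δ) * (t ^ E t / t)) := by
  rw [(hE.id_rpow ht).deriv, mul_comm (t ^ E t / t)]
  have hpos : 0 < t ^ E t / t := div_pos (rpow_pos_of_pos ht _) ht
  obtain ⟨hδl, hδu⟩ := abs_le.mp hδ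
  exact ⟨mul_le_mul_of_nonneg_right (by linarith) hpos.le,
    mul_le_mul_of_nonneg_right (by linarith) hpos.le⟩

noncomputable def slowPhase (t : ℝ) : ℝ :=
  if t ≤ 1 then 0 else log (log (exp 1 + (t - 1) ^ 4))

noncomputable def slowPhaseDeriv (t : ℝ) : ℝ :=
  if t ≤ 1 then 0 else 4 * (t - 1) ^ 3 / ((exp 1 + (t - 1) ^ 4) * log (exp 1 + (t - 1) ^ 4))

theorem one_le_log_exp_one_add {y : ℝ} (hy : 0 ≤ y) : 1 ≤ log (exp 1 + y) := by
  calc (1 : ℝ) = log (exp 1) := (log_exp 1).symm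
    _ ≤ log (exp 1 + y) := log_le_log (exp_pos 1) (by linarith)

theorem hasDerivAt_slowPhase (t : ℝ) : HasDerivAt slowPhase (slowPhaseDeriv t) t := by
  have hu : 0 < exp 1 + (t - 1) ^ 4 := by positivity
  have hL : log (exp 1 + (t - 1) ^ 4) ≠ 0 :=
    (one_le_log_exp_one_add (by positivity)).trans_lt' one_pos |>.ne'
  have hloglog : HasDerivAt (fun x => log (log (exp 1 + (x - 1) ^ 4)))
      (4 * (t - 1) ^ 3 / ((exp 1 + (t - 1) ^ 4) * log (exp 1 + (t - 1) ^ 4))) t := by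
    have hpoly : HasDerivAt (fun x => exp 1 + (x - 1) ^ 4) (4 * (t - 1) ^ 3) t := by
      simpa using (((hasDerivAt_id t).sub_const 1).pow 4).const_add (exp 1)
    convert (hpoly.log hu.ne').log hL using 1
    field_simp
  -- at `t = 1` both branches vanish to first order: `log (log e) = 0` and `(1 - 1) ^ 3 = 0`
  refine hasDerivAt_ite_le (hasDerivAt_const t 0) hloglog (by simp) fun h => ?_
  simp [h]

theorem abs_mul_log_mul_slowPhaseDeriv_le (t : ℝ) : |t * log t * slowPhaseDeriv t| ≤ 8 := by
  unfold slowPhaseDeriv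
  split_ifs with ht
  · simp
  set s := t - 1
  have hs0 : 0 < s := by linarith [not_le.mp ht]
  set u := exp 1 + s ^ 4
  have hL : 1 ≤ log u := one_le_log_exp_one_add (by positivity)
  have he : 2 ≤ exp 1 := by linarith [add_one_le_exp (1 : ℝ)]
  have htu : t ≤ u := by nlinarith [sq_nonneg (s ^ 2 - 1), sq_nonneg (s - 1)]
  have hts : t * s ^ 3 ≤ 2 * u := by nlinarith [sq_nonneg (s ^ 2 - 1), sq_nonneg (s - 1)]
  have hlogt : 0 ≤ log t := log_nonneg (by linarith)
  have huL : 0 < u * log u := mul_pos (by positivity) (by linarith)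
  rw [abs_of_nonneg (mul_nonneg (mul_nonneg (by linarith) hlogt) (by positivity)),
    mul_div_assoc', div_le_iff₀ huL]
  calc t * log t * (4 * s ^ 3) = 4 * (t * s ^ 3) * log t := by ring
    _ ≤ 4 * (2 * u) * log u :=
      mul_le_mul (by linarith) (log_le_log (by linarith) htu) hlogt (by positivity)
    _ = 8 * (u * log u) := by ring

theorem g_deriv_estimate_general (a b ε : ℝ) (hb : 0 < b)
    (hab : 1 < a - b) (hε : 0 < ε) (hε' : ε < min 1 ((a - 1 - b) / (224 * b)))
    (φ : ℝ → ℝ)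
    (hφ : ∀ t : ℝ, φ t = if t ≤ 1 then 3 * π / 2
      else 3 * π / 2 + ε * Real.log (Real.log (Real.exp 1 + (t - 1) ^ 4)))
    (g : ℝ → ℝ)
    (hg : ∀ t : ℝ, 0 < t → g t = t ^ (a + b * Real.sin (φ t))) :
    (∀ t : ℝ, 0 < t →
      0 < (a - b - 8 * b * ε) * (g t / t) ∧
      (a - b - 8 * b * ε) * (g t / t) ≤ deriv g t ∧
      deriv g t ≤ (a + b + 8 * b * ε) * (g t / t)) ∧
    (∀ t : ℝ, 0 < t → 0 < deriv g t) := by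
  have hφ_eq : φ = fun t => 3 * π / 2 + ε * slowPhase t := by
    funext t
    rw [hφ t, slowPhase]
    split_ifs <;> ring
  have hc : 0 < a - b - 8 * b * ε := by
    have h := (lt_min_iff.mp hε').2
    rw [lt_div_iff₀ (by positivity)] at h
    nlinarith
  have hgt_pos : ∀ t, 0 < t → 0 < g t / t := fun t ht => by
    rw [hg t ht]
    exact div_pos (rpow_pos_of_pos ht _) ht
  have bounds : ∀ t, 0 < t → deriv g t ∈
      Icc ((a - b - 8 * b * ε) * (g t / t)) ((a + b + 8 * b * ε) * (g t / t)) := by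
    intro t ht
    have hE : HasDerivAt (fun x => a + b * sin (φ x))
        (b * (cos (φ t) * (ε * slowPhaseDeriv t))) t := by
      subst hφ_eq
      exact ((((hasDerivAt_slowPhase t).const_mul ε).const_add _).sin.const_mul b).const_add a
    have hδ : |t * log t * (b * (cos (φ t) * (ε * slowPhaseDeriv t)))| ≤ 8 * b * ε := by
      calc _ = b * ε * (|cos (φ t)| * |t * log t * slowPhaseDeriv t|) := by
            simp only [abs_mul, abs_of_pos hb, abs_of_pos hε]; ring
        _ ≤ b * ε * (1 * 8) := by
            gcongr
            exacts [abs_cos_le_one _, abs_mul_log_mul_slowPhaseDeriv_le t]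
        _ = 8 * b * ε := by ring
    have hsin := mul_le_mul_of_nonneg_left (neg_one_le_sin (φ t)) hb.le
    have hsin' := mul_le_mul_of_nonneg_left (sin_le_one (φ t)) hb.le
    rw [Filter.EventuallyEq.deriv_eq (eventually_nhds_iff.mpr ⟨Ioi 0, hg, isOpen_Ioi, ht⟩), hg t ht]
    exact deriv_id_rpow_mem_Icc hE ht (by linarith) (by linarith) hδ
  refine ⟨fun t ht => ⟨mul_pos hc (hgt_pos t ht), bounds t ht⟩, fun t ht => ?_⟩
  exact (mul_pos hc (hgt_pos t ht)).trans_le (bounds t ht).1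

theorem g_deriv_estimate (a b ε : ℝ) (ha : 0 < a) (hb : 0 < b)
    (hab : 1 < a - b) (hε : 0 < ε) (hε' : ε < min 1 ((a - 1 - b) / (224 * b)))
    (φ : ℝ → ℝ)
    (hφ : ∀ t : ℝ, φ t = if t ≤ 1 then 3 * π / 2
      else 3 * π / 2 + ε * Real.log (Real.log (Real.exp 1 + (t - 1) ^ 4)))
    (g : ℝ → ℝ) (hg0 : g 0 = 0)
    (hg : ∀ t : ℝ, 0 < t → g t = t ^ (a + b * Real.sin (φ t))) :
    (∀ t : ℝ, 0 < t →
      0 < (a - b - 8 * b * ε) * (g t / t) ∧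
      (a - b - 8 * b * ε) * (g t / t) ≤ deriv g t ∧
      deriv g t ≤ (a + b + 8 * b * ε) * (g t / t)) ∧
    (∀ t : ℝ, 0 < t → 0 < deriv g t) :=
  g_deriv_estimate_general a b ε hb hab hε hε' φ hφ g hg
end

section
/- Let a, b > 0 with a − b > 1, let 0 < ε < min{1, (a−1−b)/(224b)}, let φ(t) = 3π/2 for t ≤ 1 and φ(t) = 3π/2 + ε·ln(ln(e + (t−1)⁴)) for t > 1, and let g(t) = t^(a + b·sin(φ(t))) for t > 0, g(0) = 0. Then g is strictly convex on [0,∞), and its derivative g' is strictly increasing on [0,∞). -/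
/-!
Write `g t = t ^ u t` with `u = a - b cos (ε L)`, `L t = log (log (e + (t - 1)₊ ^ 4))`. Then
`t² g'' / g = (t log t · u' + u)² + t² log t · u'' + 2 t u' - u`. The phase `L` grows so slowly
that `t L'`, `t log t · L'` and `t² log t · L''` are bounded by absolute constants, so the terms
involving `u'`, `u''` are `O(b ε)`, while `u ≥ a - b > 1 + 224 b ε`; hence `g'' > 0` on `(0, ∞)`.
Near `0`, `0 ≤ g t ≤ t ^ (a - b)` with `a - b > 1`, so `g` is differentiable from the right at `0`,
and the derivative of a strictly convex function differentiable on `[0, ∞)` is strictly increasing.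
-/

open Real Set Filter Topology

theorem hasDerivAt_max_zero_pow {n : ℕ} (hn : 2 ≤ n) (x : ℝ) :
    HasDerivAt (fun y : ℝ => max y 0 ^ n) (n * max x 0 ^ (n - 1)) x := by
  have hn0 : n ≠ 0 := by omega
  have hn1 : n - 1 ≠ 0 := by omega
  rcases lt_trichotomy x 0 with hx | rfl | hx
  · have hzero : (fun _ : ℝ => (0 : ℝ)) =ᶠ[𝓝 x] fun y => max y 0 ^ n := by
      filter_upwards [Iio_mem_nhds hx] with y (hy : y < 0)
      simp [hy.le, hn0]
    simpa [hx.le, hn1] using (hasDerivAt_const x (0 : ℝ)).congr_of_eventuallyEq hzero.symm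
  · have hleft : HasDerivWithinAt (fun y : ℝ => max y 0 ^ n) 0 (Iic 0) 0 :=
      (hasDerivWithinAt_const 0 _ 0).congr (fun y hy => by simp [mem_Iic.mp hy, hn0])
        (by simp [hn0])
    have hright : HasDerivWithinAt (fun y : ℝ => max y 0 ^ n) 0 (Ici 0) 0 := by
      simpa [hn1] using (hasDerivAt_pow n (0 : ℝ)).hasDerivWithinAt.congr
        (fun y hy => by simp [mem_Ici.mp hy]) (by simp)
    simpa [hn1, Iic_union_Ici] using hleft.union hright
  · have hpow : (fun y : ℝ => y ^ n) =ᶠ[𝓝 x] fun y => max y 0 ^ n := by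
      filter_upwards [Ioi_mem_nhds hx] with y (hy : 0 < y)
      rw [max_eq_left hy.le]
    simpa [hx.le] using (hasDerivAt_pow n x).congr_of_eventuallyEq hpow.symm

section VariableExponent

variable {u u' : ℝ → ℝ} {x d : ℝ}

theorem hasDerivAt_rpow_exponent (hu : HasDerivAt u d x) (hx : 0 < x) :
    HasDerivAt (fun t => t ^ u t) (x ^ u x * (d * log x + u x / x)) x := by
  convert (hasDerivAt_id' x).rpow hu hx using 1
  rw [rpow_sub_one hx.ne']
  field_simp
  ring

theorem hasDerivAt_rpow_exponent_deriv (hu : HasDerivAt u (u' x) x) (hu' : HasDerivAt u' d x)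
    (hx : 0 < x) :
    HasDerivAt (fun t => t ^ u t * (u' t * log t + u t / t))
      (x ^ u x * ((u' x * log x + u x / x) ^ 2 + d * log x + 2 * u' x / x - u x / x ^ 2)) x := by
  have hbracket := (hu'.fun_mul (hasDerivAt_log hx.ne')).fun_add
    (hu.fun_div (hasDerivAt_id' x) hx.ne')
  refine ((hasDerivAt_rpow_exponent hu hx).fun_mul hbracket).congr_deriv ?_
  field_simp
  ring

theorem hasDerivWithinAt_rpow_exponent_zero {p : ℝ} (hp : 1 < p)
    (hpu : ∀ t ∈ Icc 0 1, p ≤ u t) :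
    HasDerivWithinAt (fun t => t ^ u t) 0 (Ici 0) 0 := by
  refine (hasDerivWithinAt_iff_tendsto_slope' (lt_irrefl 0)).mpr ?_ |>.Ici_of_Ioi
  have hlim : Tendsto (fun t : ℝ => t ^ (p - 1)) (𝓝[>] 0) (𝓝 0) := by
    simpa [zero_rpow (by linarith : p - 1 ≠ 0)] using
      (continuousAt_rpow_const 0 (p - 1) (Or.inr (by linarith))).tendsto.mono_left
        nhdsWithin_le_nhds
  have hu0 : u 0 ≠ 0 := by linarith [hpu 0 (by simp)]
  have hslope : ∀ᶠ t in 𝓝[>] 0, slope (fun t => t ^ u t) 0 t = t ^ (u t - 1) := by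
    filter_upwards [self_mem_nhdsWithin] with t (ht : 0 < t)
    rw [slope_def_field, zero_rpow hu0, rpow_sub_one ht.ne', sub_zero, sub_zero]
  refine squeeze_zero' ?_ ?_ hlim
  · filter_upwards [hslope, self_mem_nhdsWithin] with t hs (ht : 0 < t)
    rw [hs]
    positivity
  · filter_upwards [hslope, Ioo_mem_nhdsGT one_pos] with t hs ⟨ht0, ht1⟩
    rw [hs]
    exact rpow_le_rpow_of_exponent_ge ht0 ht1.le (by linarith [hpu t ⟨ht0.le, ht1.le⟩])

theorem differentiableOn_rpow_exponent {p : ℝ} (hp : 1 < p) (hpu : ∀ t ∈ Icc 0 1, p ≤ u t)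
    (hu : ∀ t, 0 < t → HasDerivAt u (u' t) t) :
    DifferentiableOn ℝ (fun t => t ^ u t) (Ici 0) := by
  intro x (hx : 0 ≤ x)
  rcases hx.eq_or_lt with rfl | hx
  · exact (hasDerivWithinAt_rpow_exponent_zero hp hpu).differentiableWithinAt
  · exact (hasDerivAt_rpow_exponent (hu x hx) hx).differentiableAt.differentiableWithinAt

theorem strictConvexOn_rpow_exponent {u'' : ℝ → ℝ} {p : ℝ} (hp : 1 < p)
    (hpu : ∀ t ∈ Icc 0 1, p ≤ u t) (hu : ∀ t, 0 < t → HasDerivAt u (u' t) t)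
    (hu' : ∀ t, 0 < t → HasDerivAt u' (u'' t) t)
    (hpos : ∀ t, 0 < t →
      0 < (u' t * log t + u t / t) ^ 2 + u'' t * log t + 2 * u' t / t - u t / t ^ 2) :
    StrictConvexOn ℝ (Ici 0) (fun t => t ^ u t) := by
  refine strictConvexOn_of_deriv2_pos (convex_Ici 0)
    (differentiableOn_rpow_exponent hp hpu hu).continuousOn fun x hx => ?_
  rw [interior_Ici] at hx
  have hderiv :
      deriv (fun t => t ^ u t) =ᶠ[𝓝 x] fun t => t ^ u t * (u' t * log t + u t / t) := by
    filter_upwards [Ioi_mem_nhds hx] with t ht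
    exact (hasDerivAt_rpow_exponent (hu t ht) ht).deriv
  rw [Function.iterate_succ_apply, Function.iterate_one, hderiv.deriv_eq,
    (hasDerivAt_rpow_exponent_deriv (hu x hx) (hu' x hx) hx).deriv]
  exact mul_pos (rpow_pos_of_pos hx _) (hpos x hx)

end VariableExponent

theorem sq_add_sub_pos_of_abs_le {u A B C δ : ℝ} (hδ : 0 ≤ δ) (hu : 1 + 132 * δ < u)
    (hA : |A| ≤ 6 * δ) (hB : |B| ≤ 108 * δ) (hC : |C| ≤ 6 * δ) :
    0 < (A + u) ^ 2 + B + 2 * C - u := by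
  obtain ⟨hA1, -⟩ := abs_le.mp hA
  obtain ⟨hB1, -⟩ := abs_le.mp hB
  obtain ⟨hC1, -⟩ := abs_le.mp hC
  have hsq : (u - 6 * δ) ^ 2 ≤ (A + u) ^ 2 := by nlinarith
  -- so the left side is at least `u * (u - 1 - 12 * δ) - 120 * δ`
  nlinarith

theorem sin_three_pi_div_two_add (x : ℝ) : sin (3 * π / 2 + x) = -cos x := by
  rw [show 3 * π / 2 + x = x + π + π / 2 by ring, sin_add_pi_div_two, cos_add_pi]

namespace SlowPhase

/-- `(t - 1)₊`. Its fourth power is twice differentiable, so `3π/2 + ε * phase t` writes the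
piecewise `φ` of the statement as one twice differentiable expression. -/
noncomputable def ramp (t : ℝ) : ℝ := max (t - 1) 0

noncomputable def quartic (t : ℝ) : ℝ := exp 1 + ramp t ^ 4

noncomputable def phase (t : ℝ) : ℝ := log (log (quartic t))

noncomputable def phaseDeriv (t : ℝ) : ℝ := 4 * ramp t ^ 3 / (quartic t * log (quartic t))

noncomputable def phaseDeriv2 (t : ℝ) : ℝ :=
  12 * ramp t ^ 2 / (quartic t * log (quartic t)) -
    (4 * ramp t ^ 3) ^ 2 * (log (quartic t) + 1) / (quartic t * log (quartic t)) ^ 2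

variable {t : ℝ}

theorem ramp_of_le (ht : t ≤ 1) : ramp t = 0 := max_eq_right (by linarith)

theorem ramp_of_ge (ht : 1 ≤ t) : ramp t = t - 1 := max_eq_left (by linarith)

theorem exp_one_le_quartic (t : ℝ) : exp 1 ≤ quartic t :=
  le_add_of_nonneg_right (by unfold ramp; positivity)

theorem quartic_pos (t : ℝ) : 0 < quartic t := (exp_pos 1).trans_le (exp_one_le_quartic t)

theorem one_le_log_quartic (t : ℝ) : 1 ≤ log (quartic t) := by
  simpa using log_le_log (exp_pos 1) (exp_one_le_quartic t)

theorem phase_of_le (ht : t ≤ 1) : phase t = 0 := by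
  simp [phase, quartic, ramp_of_le ht]

theorem phaseDeriv_of_le (ht : t ≤ 1) : phaseDeriv t = 0 := by
  simp [phaseDeriv, ramp_of_le ht]

theorem phaseDeriv2_of_le (ht : t ≤ 1) : phaseDeriv2 t = 0 := by
  simp [phaseDeriv2, ramp_of_le ht]

theorem hasDerivAt_ramp_pow {n : ℕ} (hn : 2 ≤ n) (x : ℝ) :
    HasDerivAt (fun t => ramp t ^ n) (n * ramp x ^ (n - 1)) x := by
  simpa [ramp, Function.comp_def] using
    (hasDerivAt_max_zero_pow hn (x - 1)).comp x ((hasDerivAt_id' x).sub_const 1)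

theorem hasDerivAt_quartic (x : ℝ) : HasDerivAt quartic (4 * ramp x ^ 3) x :=
  (hasDerivAt_ramp_pow (n := 4) (by norm_num) x).const_add (exp 1)

theorem hasDerivAt_phase (x : ℝ) : HasDerivAt phase (phaseDeriv x) x := by
  have := ((hasDerivAt_quartic x).log (quartic_pos x).ne').log
    (one_pos.trans_le (one_le_log_quartic x)).ne'
  rwa [div_div] at this

theorem hasDerivAt_phaseDeriv (x : ℝ) : HasDerivAt phaseDeriv (phaseDeriv2 x) x := by
  have hQ := quartic_pos x
  have hW := one_pos.trans_le (one_le_log_quartic x)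
  have hnum : HasDerivAt (fun t => 4 * ramp t ^ 3) (12 * ramp x ^ 2) x :=
    ((hasDerivAt_ramp_pow (n := 3) (by norm_num) x).const_mul 4).congr_deriv (by norm_num; ring)
  have hden := (hasDerivAt_quartic x).fun_mul ((hasDerivAt_quartic x).log hQ.ne')
  refine (hnum.fun_div hden (by positivity)).congr_deriv ?_
  rw [phaseDeriv2]
  field_simp

theorem self_le_quartic (t : ℝ) : t ≤ quartic t := by
  rcases le_total t 1 with ht | ht
  · linarith [exp_one_le_quartic t, exp_one_gt_two]
  · rw [quartic, ramp_of_ge ht]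
    nlinarith [exp_one_gt_two, sq_nonneg ((t - 1) ^ 2 - 1 / 2), sq_nonneg (t - 1 - 1 / 2)]

theorem four_mul_ramp_pow_three_mul_le (t : ℝ) : 4 * ramp t ^ 3 * t ≤ 6 * quartic t := by
  rcases le_total t 1 with ht | ht
  · simp [ramp_of_le ht, (quartic_pos t).le]
  · rw [quartic, ramp_of_ge ht]
    nlinarith [exp_one_gt_two, sq_nonneg ((t - 1) ^ 2 - (t - 1) - 1), sq_nonneg (t - 2)]

theorem twelve_mul_ramp_sq_mul_sq_le (t : ℝ) : 12 * ramp t ^ 2 * t ^ 2 ≤ 36 * quartic t := by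
  rcases le_total t 1 with ht | ht
  · simp [ramp_of_le ht, (quartic_pos t).le]
  · rw [quartic, ramp_of_ge ht]
    nlinarith [exp_one_gt_two, sq_nonneg ((t - 1) ^ 2 - (t - 1) - 1), sq_nonneg (t - 2)]

theorem phaseDeriv_nonneg (t : ℝ) : 0 ≤ phaseDeriv t := by
  have := quartic_pos t
  have := one_le_log_quartic t
  unfold phaseDeriv ramp
  positivity

theorem abs_phaseDeriv_mul_le (ht : 0 ≤ t) : |phaseDeriv t * t| ≤ 6 := by
  have hQ := quartic_pos t
  have hW := one_le_log_quartic t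
  rw [abs_of_nonneg (mul_nonneg (phaseDeriv_nonneg t) ht), phaseDeriv, div_mul_eq_mul_div,
    div_le_iff₀ (by positivity)]
  nlinarith [four_mul_ramp_pow_three_mul_le t]

theorem abs_phaseDeriv_mul_mul_log_le (ht : 0 < t) : |phaseDeriv t * t * log t| ≤ 6 := by
  rcases le_total t 1 with ht1 | ht1
  · simp [phaseDeriv_of_le ht1]
  have hQ := quartic_pos t
  have hW := one_le_log_quartic t
  have hlog : log t ≤ log (quartic t) := log_le_log ht (self_le_quartic t)
  have hlog0 : 0 ≤ log t := log_nonneg ht1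
  have hr : 0 ≤ 4 * ramp t ^ 3 * t := by unfold ramp; positivity
  rw [abs_of_nonneg (by have := phaseDeriv_nonneg t; positivity), phaseDeriv,
    div_mul_eq_mul_div, div_mul_eq_mul_div, div_le_iff₀ (by positivity)]
  nlinarith [four_mul_ramp_pow_three_mul_le t, mul_le_mul_of_nonneg_left hlog hr]

theorem abs_phaseDeriv2_mul_sq_mul_log_le (ht : 0 < t) :
    |phaseDeriv2 t * t ^ 2 * log t| ≤ 72 := by
  rcases le_total t 1 with ht1 | ht1
  · simp [phaseDeriv2_of_le ht1]
  have hsplit : phaseDeriv2 t * t ^ 2 * log t =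
      12 * ramp t ^ 2 * t ^ 2 / quartic t * (log t / log (quartic t)) -
        (4 * ramp t ^ 3 * t / quartic t) ^ 2 *
          ((log (quartic t) + 1) * log t / log (quartic t) ^ 2) := by
    have := quartic_pos t
    have := one_le_log_quartic t
    rw [phaseDeriv2]
    field_simp
  set Q := quartic t
  set W := log Q
  have hQ : 0 < Q := quartic_pos t
  have hW : 1 ≤ W := one_le_log_quartic t
  have hlog : log t ≤ W := log_le_log ht (self_le_quartic t)
  have hlog0 : 0 ≤ log t := log_nonneg ht1
  have hα : 12 * ramp t ^ 2 * t ^ 2 / Q ∈ Icc 0 36 := by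
    refine ⟨by positivity, ?_⟩
    rw [div_le_iff₀ hQ]
    exact twelve_mul_ramp_sq_mul_sq_le t
  have hβ : 4 * ramp t ^ 3 * t / Q ∈ Icc 0 6 := by
    refine ⟨by unfold ramp; positivity, ?_⟩
    rw [div_le_iff₀ hQ]
    exact four_mul_ramp_pow_three_mul_le t
  have hγ : log t / W ∈ Icc 0 1 := ⟨by positivity, (div_le_one (by positivity)).mpr hlog⟩
  have hκ : (W + 1) * log t / W ^ 2 ∈ Icc 0 2 := by
    refine ⟨by positivity, ?_⟩
    rw [div_le_iff₀ (by positivity)]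
    nlinarith
  rw [hsplit, abs_sub_le_iff]
  constructor <;> nlinarith [hα.1, hα.2, hβ.1, hβ.2, hγ.1, hγ.2, hκ.1, hκ.2]

noncomputable def exponent (a b ε t : ℝ) : ℝ := a - b * cos (ε * phase t)

noncomputable def exponentDeriv (b ε t : ℝ) : ℝ := b * ε * sin (ε * phase t) * phaseDeriv t

noncomputable def exponentDeriv2 (b ε t : ℝ) : ℝ :=
  b * ε ^ 2 * cos (ε * phase t) * phaseDeriv t ^ 2 + b * ε * sin (ε * phase t) * phaseDeriv2 t

variable {a b ε : ℝ}

theorem sub_le_exponent (hb : 0 ≤ b) (t : ℝ) : a - b ≤ exponent a b ε t := by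
  rw [exponent]
  nlinarith [cos_le_one (ε * phase t)]

theorem hasDerivAt_exponent (x : ℝ) : HasDerivAt (exponent a b ε) (exponentDeriv b ε x) x :=
  ((((hasDerivAt_phase x).const_mul ε).cos.const_mul b).const_sub a).congr_deriv (by
    rw [exponentDeriv]; ring)

theorem hasDerivAt_exponentDeriv (x : ℝ) :
    HasDerivAt (exponentDeriv b ε) (exponentDeriv2 b ε x) x :=
  ((((hasDerivAt_phase x).const_mul ε).sin.const_mul (b * ε)).fun_mul
    (hasDerivAt_phaseDeriv x)).congr_deriv (by rw [exponentDeriv2]; ring)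

theorem abs_exponentDeriv_mul_le (hb : 0 ≤ b) (hε : 0 ≤ ε) (ht : 0 ≤ t) :
    |exponentDeriv b ε t * t| ≤ 6 * (b * ε) :=
  calc |exponentDeriv b ε t * t| = b * ε * |sin (ε * phase t)| * |phaseDeriv t * t| := by
        rw [exponentDeriv, mul_assoc, abs_mul, abs_mul, abs_mul, abs_of_nonneg hb,
          abs_of_nonneg hε]
    _ ≤ b * ε * 1 * 6 := by gcongr; exacts [abs_sin_le_one _, abs_phaseDeriv_mul_le ht]
    _ = 6 * (b * ε) := by ring

theorem abs_exponentDeriv_mul_mul_log_le (hb : 0 ≤ b) (hε : 0 ≤ ε) (ht : 0 < t) :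
    |exponentDeriv b ε t * t * log t| ≤ 6 * (b * ε) :=
  calc |exponentDeriv b ε t * t * log t|
        = b * ε * |sin (ε * phase t)| * |phaseDeriv t * t * log t| := by
        rw [exponentDeriv, mul_assoc, mul_assoc, ← mul_assoc (phaseDeriv t), abs_mul, abs_mul,
          abs_mul, abs_of_nonneg hb, abs_of_nonneg hε]
    _ ≤ b * ε * 1 * 6 := by gcongr; exacts [abs_sin_le_one _, abs_phaseDeriv_mul_mul_log_le ht]
    _ = 6 * (b * ε) := by ring

theorem abs_exponentDeriv2_mul_sq_mul_log_le (hb : 0 ≤ b) (hε : 0 ≤ ε) (hε1 : ε ≤ 1)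
    (ht : 0 < t) : |exponentDeriv2 b ε t * t ^ 2 * log t| ≤ 108 * (b * ε) :=
  calc |exponentDeriv2 b ε t * t ^ 2 * log t|
        = |b * ε ^ 2 * cos (ε * phase t) * ((phaseDeriv t * t) * (phaseDeriv t * t * log t)) +
            b * ε * sin (ε * phase t) * (phaseDeriv2 t * t ^ 2 * log t)| := by
        rw [exponentDeriv2]; ring_nf
    _ ≤ b * ε ^ 2 * |cos (ε * phase t)| * (|phaseDeriv t * t| * |phaseDeriv t * t * log t|) +
          b * ε * |sin (ε * phase t)| * |phaseDeriv2 t * t ^ 2 * log t| := by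
        refine (abs_add_le _ _).trans_eq ?_
        simp only [abs_mul, abs_pow, abs_of_nonneg hb, abs_of_nonneg hε]
    _ ≤ b * ε ^ 2 * 1 * (6 * 6) + b * ε * 1 * 72 := by
        gcongr
        exacts [abs_cos_le_one _, abs_phaseDeriv_mul_le ht.le, abs_phaseDeriv_mul_mul_log_le ht,
          abs_sin_le_one _, abs_phaseDeriv2_mul_sq_mul_log_le ht]
    _ ≤ 108 * (b * ε) := by nlinarith [mul_nonneg hb hε]

theorem exponent_curvature_pos (hb : 0 ≤ b) (hε : 0 ≤ ε) (hε1 : ε ≤ 1)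
    (hab : 1 + 132 * (b * ε) < a - b) (ht : 0 < t) :
    0 < (exponentDeriv b ε t * log t + exponent a b ε t / t) ^ 2 + exponentDeriv2 b ε t * log t +
      2 * exponentDeriv b ε t / t - exponent a b ε t / t ^ 2 := by
  have hpos := sq_add_sub_pos_of_abs_le (mul_nonneg hb hε)
    (hab.trans_le (sub_le_exponent (ε := ε) hb t)) (abs_exponentDeriv_mul_mul_log_le hb hε ht)
    (abs_exponentDeriv2_mul_sq_mul_log_le hb hε hε1 ht) (abs_exponentDeriv_mul_le hb hε ht.le)
  refine (div_pos hpos (pow_pos ht 2)).trans_eq ?_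
  field_simp

end SlowPhase

open SlowPhase in
theorem g_strictly_convex_general (a b ε : ℝ) (hb : 0 < b)
    (hab : 1 < a - b) (hε : 0 < ε) (hε' : ε < min 1 ((a - 1 - b) / (224 * b)))
    (φ : ℝ → ℝ)
    (hφ : ∀ t : ℝ, φ t = if t ≤ 1 then 3 * π / 2
      else 3 * π / 2 + ε * Real.log (Real.log (Real.exp 1 + (t - 1) ^ 4)))
    (g : ℝ → ℝ) (hg0 : g 0 = 0)
    (hg : ∀ t : ℝ, 0 < t → g t = t ^ (a + b * Real.sin (φ t))) :
    StrictConvexOn ℝ (Set.Ici 0) g ∧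
    StrictMonoOn (derivWithin g (Set.Ici 0)) (Set.Ici 0) := by
  obtain ⟨hε1, hεab⟩ := lt_min_iff.mp hε'
  have hδ : 1 + 132 * (b * ε) < a - b := by
    rw [lt_div_iff₀ (by positivity)] at hεab
    nlinarith [mul_pos hb hε]
  have hφ' : ∀ t, φ t = 3 * π / 2 + ε * phase t := by
    intro t
    rw [hφ t]
    split_ifs with ht
    · simp [phase_of_le ht]
    · rw [phase, quartic, ramp_of_ge (not_le.mp ht).le]
  have heq : EqOn (fun t => t ^ exponent a b ε t) g (Ici 0) := by
    intro t (ht : 0 ≤ t)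
    dsimp only
    rcases ht.eq_or_lt with rfl | ht
    · rw [hg0, zero_rpow (by linarith [sub_le_exponent (a := a) (ε := ε) hb.le 0])]
    · rw [hg t ht, hφ', sin_three_pi_div_two_add, exponent]
      ring_nf
  have hpu : ∀ t ∈ Icc (0 : ℝ) 1, a - b ≤ exponent a b ε t :=
    fun t _ => sub_le_exponent hb.le t
  have hconv := (strictConvexOn_rpow_exponent hab hpu (fun t _ => hasDerivAt_exponent t)
    (fun t _ => hasDerivAt_exponentDeriv t)
    (fun t ht => exponent_curvature_pos hb.le hε.le hε1.le hδ ht)).congr heq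
  exact ⟨hconv, hconv.strictMonoOn_derivWithin
    ((differentiableOn_rpow_exponent hab hpu fun t _ => hasDerivAt_exponent t).congr heq.symm)⟩

theorem g_strictly_convex (a b ε : ℝ) (ha : 0 < a) (hb : 0 < b)
    (hab : 1 < a - b) (hε : 0 < ε) (hε' : ε < min 1 ((a - 1 - b) / (224 * b)))
    (φ : ℝ → ℝ)
    (hφ : ∀ t : ℝ, φ t = if t ≤ 1 then 3 * π / 2
      else 3 * π / 2 + ε * Real.log (Real.log (Real.exp 1 + (t - 1) ^ 4)))
    (g : ℝ → ℝ) (hg0 : g 0 = 0)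
    (hg : ∀ t : ℝ, 0 < t → g t = t ^ (a + b * Real.sin (φ t))) :
    StrictConvexOn ℝ (Set.Ici 0) g ∧
    StrictMonoOn (derivWithin g (Set.Ici 0)) (Set.Ici 0) :=
  g_strictly_convex_general a b ε hb hab hε hε' φ hφ g hg0 hg
end
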